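/- The affine Hermitian curve y^q + y = x^{q+1} over GF(q^2) has exactly q^3 points; that is, the number of pairs (x,y) in GF(q^2)^2 satisfying y^q + y = x^{q+1} equals q^3. -/

import Mathlib

/-!
The map `T y = y ^ q + y` is additive, since `q` is a power of the characteristic, and it is the
trace from `F` to its subfield `K = {c | c ^ q = c}`. Both `ker T` and `K` are root sets of
polynomials of degree `q`, so each has at most `q` elements; as `|ker T| * |range T| = q ^ 2` and
`range T ⊆ K`, both bounds are attained and `T` maps onto `K`. The norm `x ^ (q + 1)` lies in `K`,
so for each `x` the equation `y ^ q + y = x ^ (q + 1)` has exactly `|ker T| = q` solutions `y`.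
-/

open Polynomial

theorem FiniteField.exists_expChar_eq_pow_of_dvd_card {F : Type*} [Field F] [Fintype F] {q : ℕ}
    (hq : q ∣ Fintype.card F) : ∃ p k, ExpChar F p ∧ q = p ^ k := by
  obtain ⟨p, _, n, hp, hcard⟩ := FiniteField.card' F
  have := Fact.mk hp
  obtain ⟨k, -, rfl⟩ := (Nat.dvd_prime_pow hp).mp (hcard ▸ hq)
  exact ⟨p, k, inferInstance, rfl⟩

theorem FiniteField.two_le_of_card_eq_sq {F : Type*} [Field F] [Fintype F] {q : ℕ}
    (hF : Fintype.card F = q ^ 2) : 2 ≤ q := by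
  have := hF ▸ Fintype.one_lt_card (α := F)
  by_contra! hq
  interval_cases q <;> simp at this

theorem FiniteField.pow_pow_of_card_eq_sq {F : Type*} [Field F] [Fintype F] {q : ℕ}
    (hF : Fintype.card F = q ^ 2) (x : F) : (x ^ q) ^ q = x := by
  rw [← pow_mul, ← sq, ← hF, FiniteField.pow_card]

theorem card_pow_add_mul_eq_zero_le {F : Type*} [Field F] [Finite F] {q : ℕ} (hq : 2 ≤ q)
    (c : F) : Nat.card {y : F // y ^ q + c * y = 0} ≤ q := by
  set P : F[X] := X ^ q + C c * X
  have hdeg : P.natDegree = q := by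
    rw [natDegree_add_eq_left_of_natDegree_lt] <;> compute_degree!
  have hP : P ≠ 0 := fun h => by simp [h] at hdeg; omega
  calc Nat.card {y : F // y ^ q + c * y = 0} = (P.rootSet F).ncard := by
        rw [← Nat.card_coe_set_eq]
        congr; ext y
        simp [mem_rootSet, hP, P]
    _ ≤ q := hdeg ▸ ncard_rootSet_le P F

theorem AddMonoidHom.card_ker_eq_and_range_eq {G H : Type*} [AddGroup G] [AddGroup H] [Finite H]
    (f : G →+ H) {S : Set H} {q : ℕ} (hG : Nat.card G = q ^ 2) (hker : Nat.card f.ker ≤ q)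
    (hS : S.ncard ≤ q) (hrange : Set.range f ⊆ S) : Nat.card f.ker = q ∧ Set.range f = S := by
  have hprod : Nat.card f.ker * (Set.range f).ncard = q ^ 2 := by
    rw [← hG, ← f.ker.card_mul_index, AddSubgroup.index_ker, ← Nat.card_coe_set_eq,
      ← f.coe_range, SetLike.coe_sort_coe]
  have hrange_le : (Set.range f).ncard ≤ q := (Set.ncard_le_ncard hrange).trans hS
  have hrange_pos : 0 < (Set.range f).ncard := (Set.ncard_pos).mpr (Set.range_nonempty f)
  have hker_eq : Nat.card f.ker = q := by nlinarith
  refine ⟨hker_eq, Set.eq_of_subset_of_ncard_le hrange ?_⟩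
  rw [hker_eq, sq] at hprod
  have := Nat.eq_of_mul_eq_mul_left (by omega) hprod
  omega

section FrobeniusTrace

variable {F : Type*} [Field F] {p m : ℕ} [ExpChar F p]

variable (F p m) in
def frobeniusTrace : F →+ F :=
  (iterateFrobenius F p m).toAddMonoidHom + AddMonoidHom.id F

theorem frobeniusTrace_apply (y : F) : frobeniusTrace F p m y = y ^ p ^ m + y := rfl

variable [Fintype F] (hF : Fintype.card F = (p ^ m) ^ 2)
include hF

theorem card_ker_frobeniusTrace_and_range_eq :
    Nat.card (frobeniusTrace F p m).ker = p ^ m ∧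
      Set.range (frobeniusTrace F p m) = {c | c ^ p ^ m = c} := by
  have hq := FiniteField.two_le_of_card_eq_sq hF
  refine (frobeniusTrace F p m).card_ker_eq_and_range_eq (Nat.card_eq_fintype_card.trans hF)
    ?_ ?_ ?_
  · simpa [AddMonoidHom.mem_ker, frobeniusTrace_apply]
      using card_pow_add_mul_eq_zero_le hq (1 : F)
  · simpa [← Nat.card_coe_set_eq, Set.coe_ofPred, sub_eq_zero, ← sub_eq_add_neg]
      using card_pow_add_mul_eq_zero_le hq (-1 : F)
  · rintro _ ⟨y, rfl⟩
    simp only [frobeniusTrace_apply, Set.mem_ofPred_eq, add_pow_expChar_pow,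
      FiniteField.pow_pow_of_card_eq_sq hF, add_comm]

theorem card_frobeniusTrace_fiber_norm (x : F) :
    Nat.card {y : F // y ^ p ^ m + y = x ^ (p ^ m + 1)} = p ^ m := by
  obtain ⟨hker, hrange⟩ := card_ker_frobeniusTrace_and_range_eq hF
  obtain ⟨b, hb⟩ : x ^ (p ^ m + 1) ∈ Set.range (frobeniusTrace F p m) := by
    rw [hrange, Set.mem_ofPred_eq, pow_succ, mul_pow, FiniteField.pow_pow_of_card_eq_sq hF,
      mul_comm]
  calc _ = Nat.card (frobeniusTrace F p m ⁻¹' {frobeniusTrace F p m b}) := by rw [hb]; rfl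
    _ = p ^ m := (Nat.card_congr ((frobeniusTrace F p m).fiberEquivKer b)).trans hker

end FrobeniusTrace

theorem hermitian_curve_point_count_general
    (q : ℕ)
    (F : Type*) [Field F] [Fintype F] (hF : Fintype.card F = q ^ 2) :
    Nat.card {v : F × F // v.2 ^ q + v.2 = v.1 ^ (q + 1)} = q ^ 3 := by
  obtain ⟨p, m, _, rfl⟩ :=
    FiniteField.exists_expChar_eq_pow_of_dvd_card (hF ▸ dvd_pow_self q two_ne_zero)
  rw [Nat.card_congr
      (Equiv.subtypeProdEquivSigmaSubtype fun x y => y ^ p ^ m + y = x ^ (p ^ m + 1)),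
    Nat.card_sigma]
  simp only [card_frobeniusTrace_fiber_norm hF, Finset.sum_const, Finset.card_univ, hF,
    smul_eq_mul]
  ring

/-- The affine Hermitian curve `y^q + y = x^(q+1)` over `GF(q^2)` has exactly `q^3` points. -/
theorem hermitian_curve_point_count
    (p m q : ℕ) (hp : p.Prime) (hm : 1 ≤ m) (hq : q = p ^ m)
    (F : Type*) [Field F] [Fintype F] (hF : Fintype.card F = q ^ 2) :
    Nat.card {v : F × F // v.2 ^ q + v.2 = v.1 ^ (q + 1)} = q ^ 3 :=
  hermitian_curve_point_count_general q F hF
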